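/- Let H ∈ (1/2, 1), T > 0, a < -T, and 0 < γ < 1 - H. If h : [1/a, 0] → ℝ satisfies |h(v)| ≤ Y (-v)^{1/2-γ} for some Y > 0, then for every t ∈ (0, T] and ε ∈ (1/a, 0), |∫_{ε}^{0} ∂_s F_t(1/v) (1/v^3) h(v) dv| ≤ C Y (-ε)^{1-H-γ}, where C = (3/2-H)(H-1/2) T (1 + T/a)^{H-5/2} / (1 - H - γ) and F_t(s) = (-t-s)^{H-1/2} - (-s)^{H-1/2}. -/

import Mathlib

open Real MeasureTheory intervalIntegral

/-!
By the mean value theorem, `|∂ₛ Fₜ(s)| ≤ (H - 1/2) (3/2 - H) t (-t - s)^(H - 5/2)`. At `s = 1/v`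
one has `-t - s = (tv + 1) / (-v)` with `tv + 1 ≥ 1 + T/a > 0`, so together with the factor
`|v|⁻³` and the Hölder bound on `h` the integrand is at most `C Y (-v)^(-H-γ)`. Since
`H + γ < 1` this majorant is integrable at `0`, with integral `C Y (-ε)^(1-H-γ) / (1-H-γ)`.
-/

/-- `∂ₛ Fₜ(s)`. -/
noncomputable def kernelDeriv (H t s : ℝ) : ℝ :=
  (H - 1/2) * ((-s) ^ (H - 3/2) - (-t - s) ^ (H - 3/2))

lemma rpow_sub_rpow_le_of_nonpos {x y q : ℝ} (hx : 0 < x) (hxy : x < y) (hq : q ≤ 0) :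
    x ^ q - y ^ q ≤ -q * x ^ (q - 1) * (y - x) := by
  obtain ⟨c, ⟨hxc, hcy⟩, hc⟩ := exists_hasDerivAt_eq_slope (fun z => z ^ q)
    (fun z => q * z ^ (q - 1)) hxy
    (continuousOn_id.rpow_const fun z hz => Or.inl (hx.trans_le hz.1).ne')
    (fun z hz => hasDerivAt_rpow_const (Or.inl (hx.trans hz.1).ne'))
  have hslope : x ^ q - y ^ q = -q * c ^ (q - 1) * (y - x) := by
    rw [eq_div_iff (sub_pos.2 hxy).ne'] at hc
    linarith
  rw [hslope]
  have hcx : c ^ (q - 1) ≤ x ^ (q - 1) := rpow_le_rpow_of_nonpos hx hxc.le (by linarith)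
  have hq' : 0 ≤ -q := by linarith
  have hyx : 0 ≤ y - x := by linarith
  gcongr

lemma abs_kernelDeriv_le {H t s : ℝ} (hH : 1/2 ≤ H) (hH1 : H ≤ 3/2) (ht : 0 < t)
    (hs : s < -t) :
    |kernelDeriv H t s| ≤ (H - 1/2) * (3/2 - H) * t * (-t - s) ^ (H - 5/2) := by
  have hmvt := rpow_sub_rpow_le_of_nonpos (x := -t - s) (y := -s) (q := H - 3/2)
    (by linarith) (by linarith) (by linarith)
  have hmono : (-s) ^ (H - 3/2) ≤ (-t - s) ^ (H - 3/2) :=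
    rpow_le_rpow_of_nonpos (by linarith) (by linarith) (by linarith)
  rw [kernelDeriv, abs_mul, abs_of_nonneg (by linarith : 0 ≤ H - 1/2),
    abs_of_nonpos (by linarith)]
  rw [show H - 3/2 - 1 = H - 5/2 by ring, show -s - (-t - s) = t by ring] at hmvt
  calc (H - 1/2) * -((-s) ^ (H - 3/2) - (-t - s) ^ (H - 3/2))
      = (H - 1/2) * ((-t - s) ^ (H - 3/2) - (-s) ^ (H - 3/2)) := by ring
    _ ≤ (H - 1/2) * (-(H - 3/2) * (-t - s) ^ (H - 5/2) * t) :=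
        mul_le_mul_of_nonneg_left hmvt (by linarith)
    _ = _ := by ring

lemma neg_sub_one_div_rpow {t v : ℝ} (r : ℝ) (hv : v < 0) (htv : 0 ≤ t * v + 1) :
    (-t - 1 / v) ^ r = (t * v + 1) ^ r / (-v) ^ r := by
  rw [← div_rpow htv (by linarith)]
  congr 1
  field_simp [hv.ne]
  ring

lemma abs_kernelDeriv_one_div_mul_le {H T a t v : ℝ} (hH : 1/2 ≤ H) (hH1 : H ≤ 3/2)
    (ha : a < -T) (ht : 0 < t) (htT : t ≤ T) (hav : 1 / a < v) (hv : v < 0) :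
    |kernelDeriv H t (1 / v) * (1 / v ^ 3)|
      ≤ (3/2 - H) * (H - 1/2) * T * (1 + T / a) ^ (H - 5/2) * (-v) ^ (-1/2 - H) := by
  have ha0 : a < 0 := by linarith
  have hTa : 0 < 1 + T / a := by
    rw [← div_self ha0.ne, ← add_div]; exact div_pos_of_neg_of_neg (by linarith) ha0
  have hav' : a * v < 1 := by rwa [div_lt_iff_of_neg ha0, mul_comm] at hav
  have htv : 1 + T / a ≤ t * v + 1 := by
    have : T / a ≤ t / a := div_le_div_of_nonpos_of_le ha0.le htT
    have : t / a ≤ t * v := by rw [div_le_iff_of_neg ha0]; nlinarith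
    linarith
  have hs : 1 / v < -t := by
    rw [div_lt_iff_of_neg hv]; nlinarith
  have hw : 0 < -v := by linarith
  have hcube : |1 / v ^ 3| = (-v) ^ (-3 : ℝ) := by
    rw [rpow_neg hw.le, abs_div, abs_one, abs_pow, abs_of_neg hv, one_div]
    norm_cast
  have hpow : (-v) ^ (-(H - 5/2)) * (-v) ^ (-3 : ℝ) = (-v) ^ (-1/2 - H) := by
    rw [← rpow_add hw]; ring_nf
  calc |kernelDeriv H t (1 / v) * (1 / v ^ 3)|
      ≤ (H - 1/2) * (3/2 - H) * t * (-t - 1 / v) ^ (H - 5/2) * (-v) ^ (-3 : ℝ) := by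
        rw [abs_mul, hcube]
        gcongr
        exact abs_kernelDeriv_le hH hH1 ht hs
    _ = (H - 1/2) * (3/2 - H) * t * (t * v + 1) ^ (H - 5/2)
          * ((-v) ^ (-(H - 5/2)) * (-v) ^ (-3 : ℝ)) := by
        rw [neg_sub_one_div_rpow _ hv (hTa.le.trans htv), rpow_neg hw.le (H - 5/2)]
        ring
    _ ≤ (H - 1/2) * (3/2 - H) * T * (1 + T / a) ^ (H - 5/2)
          * ((-v) ^ (-(H - 5/2)) * (-v) ^ (-3 : ℝ)) := by
        gcongr (H - 1/2) * (3/2 - H) * ?_ * ?_ * _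
        · exact rpow_nonneg (hTa.le.trans htv) _
        · exact mul_nonneg (mul_nonneg (by linarith) (by linarith)) (by linarith)
        · exact rpow_le_rpow_of_nonpos hTa htv (by linarith)
    _ = _ := by rw [hpow]; ring

lemma abs_intervalIntegral_le_of_abs_le_rpow {f : ℝ → ℝ} {ε K p : ℝ} (hε : ε < 0)
    (hp : -1 < p) (hf : ∀ v ∈ Set.Ioo ε 0, |f v| ≤ K * (-v) ^ p) :
    |∫ v in ε..0, f v| ≤ K * (-ε) ^ (p + 1) / (p + 1) := by
  have hint : IntervalIntegrable (fun v => (-v) ^ p) volume ε 0 := by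
    simpa using (IntervalIntegrable.iff_comp_neg (by simp)).mp
      (intervalIntegrable_rpow' hp (a := -ε) (b := -0))
  have hval : ∫ v in ε..0, (-v) ^ p = (-ε) ^ (p + 1) / (p + 1) := by
    rw [integral_comp_neg (fun u => u ^ p), neg_zero, integral_rpow (Or.inl hp),
      zero_rpow (by linarith), sub_zero]
  calc |∫ v in ε..0, f v| ≤ ∫ v in ε..0, K * (-v) ^ p := by
        rw [← Real.norm_eq_abs]
        refine norm_integral_le_of_norm_le hε.le ?_ (hint.const_mul K)
        filter_upwards [volume.ae_ne 0] with v hv0 hv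
        exact hf v ⟨hv.1, lt_of_le_of_ne hv.2 hv0⟩
    _ = K * (-ε) ^ (p + 1) / (p + 1) := by
        rw [intervalIntegral.integral_const_mul, hval, mul_div_assoc]

theorem inverted_tail_integral_bound_general (H T a γ Y : ℝ) (h : ℝ → ℝ)
    (hH : 1/2 < H) (hH1 : H < 1) (ha : a < -T)
    (hγ : γ < 1 - H)
    (hh : ∀ v ∈ Set.Icc (1/a) (0:ℝ), |h v| ≤ Y * (-v) ^ (1/2 - γ)) :
    ∀ t ∈ Set.Ioc (0:ℝ) T, ∀ ε ∈ Set.Ioo (1/a) (0:ℝ),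
      |∫ v in ε..(0:ℝ),
          ((H - 1/2) * ((-(1/v)) ^ (H - 3/2) - (-t - 1/v) ^ (H - 3/2))) * (1 / v ^ 3) * h v|
        ≤ ((3/2 - H) * (H - 1/2) * T * (1 + T / a) ^ (H - 5/2) / (1 - H - γ))
            * Y * (-ε) ^ (1 - H - γ) := by
  rintro t ⟨ht, htT⟩ ε ⟨haε, hε⟩
  set C := (3/2 - H) * (H - 1/2) * T * (1 + T / a) ^ (H - 5/2)
  have hintegrand : ∀ v ∈ Set.Ioo ε 0,
      |kernelDeriv H t (1 / v) * (1 / v ^ 3) * h v| ≤ C * Y * (-v) ^ (-H - γ) := by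
    rintro v ⟨hεv, hv⟩
    have hker := abs_kernelDeriv_one_div_mul_le hH.le (by linarith) ha ht htT (haε.trans hεv) hv
    have hhv := hh v ⟨(haε.trans hεv).le, hv.le⟩
    calc |kernelDeriv H t (1 / v) * (1 / v ^ 3) * h v|
        = |kernelDeriv H t (1 / v) * (1 / v ^ 3)| * |h v| := abs_mul _ _
      _ ≤ C * (-v) ^ (-1/2 - H) * (Y * (-v) ^ (1/2 - γ)) :=
          mul_le_mul hker hhv (abs_nonneg _) ((abs_nonneg _).trans hker)
      _ = C * Y * (-v) ^ (-H - γ) := by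
          rw [show -H - γ = (-1/2 - H) + (1/2 - γ) by ring, rpow_add (by linarith)]
          ring
  refine (abs_intervalIntegral_le_of_abs_le_rpow hε (by linarith) hintegrand).trans_eq ?_
  rw [show -H - γ + 1 = 1 - H - γ by ring]
  ring

theorem inverted_tail_integral_bound (H T a γ Y : ℝ) (h : ℝ → ℝ)
    (hH : 1/2 < H) (hH1 : H < 1) (hT : 0 < T) (ha : a < -T)
    (hγ0 : 0 < γ) (hγ : γ < 1 - H) (hY : 0 < Y)
    (hh : ∀ v ∈ Set.Icc (1/a) (0:ℝ), |h v| ≤ Y * (-v) ^ (1/2 - γ)) :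
    ∀ t ∈ Set.Ioc (0:ℝ) T, ∀ ε ∈ Set.Ioo (1/a) (0:ℝ),
      |∫ v in ε..(0:ℝ),
          ((H - 1/2) * ((-(1/v)) ^ (H - 3/2) - (-t - 1/v) ^ (H - 3/2))) * (1 / v ^ 3) * h v|
        ≤ ((3/2 - H) * (H - 1/2) * T * (1 + T / a) ^ (H - 5/2) / (1 - H - γ))
            * Y * (-ε) ^ (1 - H - γ) :=
  inverted_tail_integral_bound_general H T a γ Y h hH hH1 ha hγ hh
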